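/- Let n ≥ 1, S < 0, c < 0 and Φ as above with Φ(τ) ≥ 0 for all τ ≥ 0. If τ₀ > 0 is a root of Φ, then the multiplicity of τ₀ as a root of Φ is exactly 2; consequently Φ(τ) = 2τ(τ − τ₀)² f(τ) for a polynomial f with f(τ₀) > 0 whenever Φ vanishes at 0 and at τ₀ and is nonnegative on [0, ∞). -/
import Mathlib

open Polynomial

/-- Any positive root of the nonnegative Hwang–Singer numerator polynomial `Φ` has
multiplicity exactly two, and `Φ` factors as `2τ(τ-τ₀)² f(τ)` with `f(τ₀) > 0`. -/
theorem phi_root_multiplicity_two (n : ℕ) (hn : 1 ≤ n) (S c : ℝ) (hS : S < 0) (hc : c < 0)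
    (Φ : ℝ → ℝ)
    (hΦ : Φ = fun τ => 2 * (τ + (1 / ((n : ℝ) * (n + 1) * (n + 2))) *
      ((n + 2) * S * (-1 - (n + 1) * τ + (1 + τ) ^ (n + 1)) +
        n * c * (1 + (n + 2) * τ - (1 + τ) ^ (n + 2)))))
    (hnonneg : ∀ τ : ℝ, 0 ≤ τ → 0 ≤ Φ τ)
    (τ₀ : ℝ) (hτ₀ : 0 < τ₀) (hroot : Φ τ₀ = 0) :
    deriv Φ τ₀ = 0 ∧ deriv (deriv Φ) τ₀ ≠ 0 ∧
    ∃ f : Polynomial ℝ, (∀ τ : ℝ, Φ τ = 2 * τ * (τ - τ₀) ^ 2 * f.eval τ) ∧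
      0 < f.eval τ₀ := by
  obtain ⟨m, rfl⟩ : ∃ m, n = m + 1 := ⟨n - 1, (Nat.succ_pred_eq_of_pos hn).symm⟩
  set K : ℝ := 1 / (((m:ℝ)+1) * ((m:ℝ)+2) * ((m:ℝ)+3)) with hK
  set P : Polynomial ℝ := C 2 * (X + C K * (C (((m:ℝ)+3) * S) *
      (C (-1) - C ((m:ℝ)+2) * X + (1+X)^(m+2)) +
      C (((m:ℝ)+1) * c) * (1 + C ((m:ℝ)+3) * X - (1+X)^(m+3)))) with hP
  -- Φ agrees with the polynomial P
  have hPe : Φ = fun τ : ℝ => P.eval τ := by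
    funext τ
    simp [hΦ, hP, hK]
    push_cast
    ring
  -- derivative formulas
  have hd1 : deriv Φ = fun τ : ℝ => P.derivative.eval τ := by
    rw [hPe]; funext τ; exact P.deriv
  have hd2 : deriv (deriv Φ) = fun τ : ℝ => P.derivative.derivative.eval τ := by
    rw [hd1]; funext τ; exact P.derivative.deriv
  -- explicit second derivative
  have hsecond : ∀ τ : ℝ, P.derivative.derivative.eval τ = 2*(1+τ)^m * (S - c*(1+τ)) := by
    intro τ
    have hm1 : ((m:ℝ)+1) ≠ 0 := by positivity
    have hm2 : ((m:ℝ)+2) ≠ 0 := by positivity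
    have hm3 : ((m:ℝ)+3) ≠ 0 := by positivity
    simp [hP, hK, derivative_mul, derivative_pow, derivative_add, derivative_sub]
    push_cast
    field_simp
    ring_nf
    all_goals simp [pow_succ]
  have hΦ0 : Φ 0 = 0 := by simp [hΦ]
  -- local minimum at τ₀, so first derivative vanishes
  have hd1τ₀ : deriv Φ τ₀ = 0 := by
    apply IsLocalMin.deriv_eq_zero
    have hev : ∀ᶠ τ in nhds τ₀, (0:ℝ) < τ := eventually_gt_nhds hτ₀
    filter_upwards [hev] with τ hτ
    rw [hroot]; exact hnonneg τ hτ.le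
  -- second derivative is positive at τ₀
  have hΦ''pos : 0 < deriv (deriv Φ) τ₀ := by
    by_contra hle
    push_neg at hle
    have hpowpos : (0:ℝ) < (1+τ₀)^m := by positivity
    have hkey : S - c*(1+τ₀) ≤ 0 := by
      rw [hd2] at hle; simp only at hle; rw [hsecond τ₀] at hle; nlinarith
    have hneg : ∀ τ ∈ Set.Ioo (0:ℝ) τ₀, deriv (deriv Φ) τ < 0 := by
      intro τ hτ
      rw [hd2]; simp only; rw [hsecond τ]
      have h1 : S - c*(1+τ) < 0 := by nlinarith [hτ.1, hτ.2]
      have h2 : (0:ℝ) < (1+τ)^m := by have := hτ.1; positivity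
      nlinarith
    have hanti : StrictAntiOn (deriv Φ) (Set.Icc 0 τ₀) := by
      apply strictAntiOn_of_deriv_neg (convex_Icc 0 τ₀)
      · rw [hd1]; exact (Polynomial.continuous _).continuousOn
      · intro τ hτ; rw [interior_Icc] at hτ; exact hneg τ hτ
    have hpos : ∀ τ ∈ Set.Ioo (0:ℝ) τ₀, 0 < deriv Φ τ := by
      intro τ hτ
      have := hanti (Set.mem_Icc.mpr ⟨hτ.1.le, hτ.2.le⟩)
        (Set.mem_Icc.mpr ⟨hτ₀.le, le_refl τ₀⟩) hτ.2
      rw [hd1τ₀] at this; exact this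
    have hmono : StrictMonoOn Φ (Set.Icc 0 τ₀) := by
      apply strictMonoOn_of_deriv_pos (convex_Icc 0 τ₀)
      · rw [hPe]; exact (Polynomial.continuous _).continuousOn
      · intro τ hτ; rw [interior_Icc] at hτ; exact hpos τ hτ
    have := hmono (Set.mem_Icc.mpr ⟨le_refl 0, hτ₀.le⟩)
      (Set.mem_Icc.mpr ⟨hτ₀.le, le_refl τ₀⟩) hτ₀
    rw [hΦ0, hroot] at this
    exact lt_irrefl 0 this
  -- factorization
  have hPτ₀ : P.eval τ₀ = 0 := by
    have h := hroot; rw [hPe] at h; simpa using h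
  have hP'τ₀ : P.derivative.eval τ₀ = 0 := by
    have h := hd1τ₀; rw [hd1] at h; simpa using h
  obtain ⟨Q, hQ⟩ : (X - C τ₀) ∣ P := dvd_iff_isRoot.mpr hPτ₀
  have hQτ₀ : Q.eval τ₀ = 0 := by
    rw [hQ] at hP'τ₀
    simpa [derivative_mul] using hP'τ₀
  obtain ⟨R, hR⟩ : (X - C τ₀) ∣ Q := dvd_iff_isRoot.mpr hQτ₀
  have hP0 : P.eval 0 = 0 := by
    have h := hΦ0; rw [hPe] at h; simpa using h
  have hR0 : R.eval 0 = 0 := by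
    rw [hQ, hR] at hP0
    simp at hP0
    rcases hP0 with h | h
    · exact absurd h hτ₀.ne'
    · exact h
  obtain ⟨F, hF⟩ : (X : Polynomial ℝ) ∣ R := by
    have := dvd_iff_isRoot.mpr hR0
    simpa using this
  -- second derivative at τ₀ in terms of F
  have hD : deriv (deriv Φ) τ₀ = 2 * (τ₀ * F.eval τ₀) := by
    rw [hd2]; simp only
    rw [hQ, hR, hF]
    simp [derivative_mul]
    ring
  have hFτ₀ : 0 < F.eval τ₀ := by
    rw [hD] at hΦ''pos; nlinarith
  refine ⟨hd1τ₀, hΦ''pos.ne', C (1/2 : ℝ) * F, ?_, ?_⟩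
  · intro τ
    rw [hPe]; simp only
    rw [hQ, hR, hF]
    simp
    ring
  · simp; linarith
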